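/- Let x be an n×n real matrix such that the operator norm of ad_x (acting on n×n matrices, ad_x(y) = xy − yx) is strictly less than 2π. Then for every n×n matrix y the Bernoulli series dexp_x^{-1}(y) = Σ_{j=0}^{∞} (B_j / j!) ad_x^j(y) converges, where B_j are the Bernoulli numbers, and it inverts the right trivialized tangent of the exponential: dexp_x( dexp_x^{-1}(y) ) = y and dexp_x^{-1}( dexp_x(y) ) = y, where dexp_x(y) = Σ_{j=0}^{∞} (1/(j+1)!) ad_x^j(y). -/

import Mathlib

/-!
`dexp_x` and `dexp_x⁻¹` are the power series `(e^z - 1)/z` and `z/(e^z - 1)` evaluated at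
`ad_x`. These are mutually inverse formal power series, and both converge absolutely at any
element of norm `< 2π` of a Banach algebra: for the Bernoulli series this follows from
`|B_{2m}|/(2m)! = 2 ζ(2m)/(2π)^{2m}` and `ζ(2m) ≤ ζ(2) < 2`. The Cauchy product of two
absolutely convergent series is the evaluation of the product series, which is `1`.
-/

attribute [local instance]
  Matrix.linftyOpNormedAddCommGroup Matrix.linftyOpNormedRing Matrix.linftyOpNormedAlgebra

/-- The adjoint operator `ad_x(y) = xy − yx` on square matrices, as a continuous linear
map. -/
noncomputable def adC {n : ℕ} (x : Matrix (Fin n) (Fin n) ℝ) :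
    Matrix (Fin n) (Fin n) ℝ →L[ℝ] Matrix (Fin n) (Fin n) ℝ :=
  LinearMap.toContinuousLinearMap (LinearMap.mulLeft ℝ x - LinearMap.mulRight ℝ x)

open Real Nat
open PowerSeries (X mk)

noncomputable def dexpCoeff (j : ℕ) : ℝ := ((j + 1)! : ℝ)⁻¹

noncomputable def bernoulliCoeff (j : ℕ) : ℝ := (bernoulli j : ℝ) / j !

lemma exp_sub_one_eq_X_mul_mk_dexpCoeff : PowerSeries.exp ℝ - 1 = X * mk dexpCoeff := by
  ext (_ | j) <;> simp [dexpCoeff, PowerSeries.coeff_succ_X_mul]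

lemma mk_bernoulliCoeff_mul_mk_dexpCoeff : mk bernoulliCoeff * mk dexpCoeff = 1 := by
  have hB : mk bernoulliCoeff = bernoulliPowerSeries ℝ := by
    ext j; simp [bernoulliCoeff, bernoulliPowerSeries]
  refine PowerSeries.X_mul_cancel ?_
  rw [mul_one, hB, mul_left_comm, ← exp_sub_one_eq_X_mul_mk_dexpCoeff,
    bernoulliPowerSeries_mul_exp_sub_one]

lemma abs_bernoulli_two_mul_div_factorial_mul {m : ℕ} (hm : m ≠ 0) :
    |(bernoulli (2 * m) : ℝ)| / (2 * m)! * (2 * π) ^ (2 * m) =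
      2 * ∑' n : ℕ, 1 / (n : ℝ) ^ (2 * m) := by
  have hζ := congrArg abs (hasSum_zeta_nat hm).tsum_eq
  rw [abs_of_nonneg (tsum_nonneg fun n => by positivity)] at hζ
  rw [hζ, mul_pow, show 2 * m = 2 * m - 1 + 1 by omega]
  simp [abs_mul, abs_div, abs_of_pos pi_pos, pow_succ]
  ring

lemma tsum_one_div_nat_pow_two_mul_le {m : ℕ} (hm : m ≠ 0) :
    ∑' n : ℕ, 1 / (n : ℝ) ^ (2 * m) ≤ π ^ 2 / 6 := by
  rw [← hasSum_zeta_two.tsum_eq]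
  refine (hasSum_zeta_nat hm).summable.tsum_le_tsum (fun n => ?_) hasSum_zeta_two.summable
  rcases n.eq_zero_or_pos with rfl | hn
  · simp [hm]
  · exact one_div_le_one_div_of_le (by positivity)
      (pow_le_pow_right₀ (by exact_mod_cast hn) (by omega))

lemma abs_bernoulliCoeff_le (j : ℕ) : |bernoulliCoeff j| ≤ 4 / (2 * π) ^ j := by
  rw [bernoulliCoeff, abs_div, abs_of_pos (by positivity : (0 : ℝ) < j !),
    le_div_iff₀ (by positivity)]
  rcases j.even_or_odd' with ⟨m, rfl | rfl⟩
  · rcases eq_or_ne m 0 with rfl | hm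
    · simp
    · rw [abs_bernoulli_two_mul_div_factorial_mul hm]
      have : π ^ 2 < 10 := by nlinarith [pi_lt_d2, pi_pos]
      linarith [tsum_one_div_nat_pow_two_mul_le hm]
  · rcases eq_or_ne m 0 with rfl | hm
    · simp [bernoulli_one]
      nlinarith [pi_le_four]
    · rw [bernoulli_eq_zero_of_odd (odd_two_mul_add_one m) (by omega)]
      simp

section NormedAlgebra

variable {A : Type*} [NormedRing A] [NormedAlgebra ℝ A]

lemma summable_norm_smul_pow {c : ℕ → ℝ} {a : A}
    (hc : Summable fun j => |c j| * ‖a‖ ^ j) :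
    Summable fun j => ‖c j • a ^ j‖ := by
  refine hc.of_norm_bounded_eventually_nat (Filter.eventually_atTop.2 ⟨1, fun j hj => ?_⟩)
  rw [norm_norm, norm_smul, Real.norm_eq_abs]
  exact mul_le_mul_of_nonneg_left (norm_pow_le' a hj) (abs_nonneg _)

lemma summable_norm_dexpCoeff_smul_pow (a : A) : Summable fun j => ‖dexpCoeff j • a ^ j‖ := by
  refine summable_norm_smul_pow ((Real.summable_pow_div_factorial ‖a‖).of_nonneg_of_le
    (fun j => by positivity) fun j => ?_)
  rw [dexpCoeff, abs_of_pos (by positivity), inv_mul_eq_div]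
  exact div_le_div_of_nonneg_left (by positivity) (by positivity)
    (by exact_mod_cast factorial_le j.le_succ)

lemma summable_norm_bernoulliCoeff_smul_pow {a : A} (ha : ‖a‖ < 2 * π) :
    Summable fun j => ‖bernoulliCoeff j • a ^ j‖ := by
  have hr : ‖a‖ / (2 * π) < 1 := (div_lt_one (by positivity)).2 ha
  refine summable_norm_smul_pow
    (((summable_geometric_of_lt_one (by positivity) hr).mul_left 4).of_nonneg_of_le
      (fun j => by positivity) fun j => ?_)
  calc |bernoulliCoeff j| * ‖a‖ ^ j ≤ 4 / (2 * π) ^ j * ‖a‖ ^ j := by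
        gcongr; exact abs_bernoulliCoeff_le j
    _ = 4 * (‖a‖ / (2 * π)) ^ j := by rw [div_pow]; ring

variable [CompleteSpace A]

lemma tsum_smul_pow_mul_tsum_smul_pow {c d : ℕ → ℝ} {a : A}
    (hc : Summable fun j => ‖c j • a ^ j‖) (hd : Summable fun j => ‖d j • a ^ j‖) :
    (∑' j, c j • a ^ j) * (∑' j, d j • a ^ j) =
      ∑' j, PowerSeries.coeff j (mk c * mk d) • a ^ j := by
  rw [tsum_mul_tsum_eq_tsum_sum_antidiagonal_of_summable_norm hc hd]
  refine tsum_congr fun m => ?_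
  rw [PowerSeries.coeff_mul, Finset.sum_smul]
  refine Finset.sum_congr rfl fun p hp => ?_
  rw [smul_mul_smul_comm, ← pow_add, Finset.HasAntidiagonal.mem_antidiagonal.1 hp]
  simp

lemma tsum_smul_pow_mul_tsum_smul_pow_eq_one {c d : ℕ → ℝ} {a : A}
    (hc : Summable fun j => ‖c j • a ^ j‖) (hd : Summable fun j => ‖d j • a ^ j‖)
    (h : mk c * mk d = 1) :
    (∑' j, c j • a ^ j) * (∑' j, d j • a ^ j) = 1 := by
  rw [tsum_smul_pow_mul_tsum_smul_pow hc hd, h, tsum_eq_single 0 fun j hj => by simp [hj]]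
  simp

end NormedAlgebra

section Operator

variable {E : Type*} [NormedAddCommGroup E] [NormedSpace ℝ E]

lemma ContinuousLinearMap.tsum_smul_pow_apply {c : ℕ → ℝ} {T : E →L[ℝ] E}
    (hc : Summable fun j => c j • T ^ j) (y : E) :
    ∑' j, c j • (T ^ j) y = (∑' j, c j • T ^ j) y :=
  ((ContinuousLinearMap.apply ℝ E y).map_tsum hc).symm

theorem ContinuousLinearMap.bernoulli_series_inverts_dexp [CompleteSpace E] (T : E →L[ℝ] E)
    (hT : ‖T‖ < 2 * π) :
    (∀ y, Summable fun j => bernoulliCoeff j • (T ^ j) y) ∧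
    (∀ y, ∑' j, dexpCoeff j • (T ^ j) (∑' i, bernoulliCoeff i • (T ^ i) y) = y) ∧
    (∀ y, ∑' j, bernoulliCoeff j • (T ^ j) (∑' i, dexpCoeff i • (T ^ i) y) = y) := by
  have hB := summable_norm_bernoulliCoeff_smul_pow hT
  have hD := summable_norm_dexpCoeff_smul_pow T
  have hBD := tsum_smul_pow_mul_tsum_smul_pow_eq_one hB hD mk_bernoulliCoeff_mul_mk_dexpCoeff
  have hDB := tsum_smul_pow_mul_tsum_smul_pow_eq_one hD hB
    (by rw [mul_comm]; exact mk_bernoulliCoeff_mul_mk_dexpCoeff)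
  refine ⟨fun y => hB.of_norm.mapL (apply ℝ E y), fun y => ?_, fun y => ?_⟩
  · rw [tsum_smul_pow_apply hB.of_norm, tsum_smul_pow_apply hD.of_norm]
    exact DFunLike.congr_fun hDB y
  · rw [tsum_smul_pow_apply hD.of_norm, tsum_smul_pow_apply hB.of_norm]
    exact DFunLike.congr_fun hBD y

end Operator

/-- If the operator norm of `ad_x` is strictly less than `2π`, then for every `y` the
Bernoulli series `dexp_x⁻¹(y) = ∑_{j≥0} (B_j/j!) ad_x^j(y)` converges, and it inverts the
right trivialized tangent `dexp_x(y) = ∑_{j≥0} ad_x^j(y)/(j+1)!` of the exponential. -/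
theorem stmt_19 {n : ℕ} (x : Matrix (Fin n) (Fin n) ℝ)
    (hx : @Norm.norm _ ContinuousLinearMap.hasOpNorm (adC x) < 2 * Real.pi) :
    (∀ y : Matrix (Fin n) (Fin n) ℝ,
      Summable fun j : ℕ =>
        (((bernoulli j : ℚ) : ℝ) / (Nat.factorial j : ℝ)) • (adC x ^ j) y)
    ∧ (∀ y : Matrix (Fin n) (Fin n) ℝ,
        (∑' j : ℕ, ((Nat.factorial (j + 1) : ℝ))⁻¹ •
          (adC x ^ j) (∑' i : ℕ,
            (((bernoulli i : ℚ) : ℝ) / (Nat.factorial i : ℝ)) • (adC x ^ i) y)) = y)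
    ∧ (∀ y : Matrix (Fin n) (Fin n) ℝ,
        (∑' j : ℕ, (((bernoulli j : ℚ) : ℝ) / (Nat.factorial j : ℝ)) •
          (adC x ^ j) (∑' i : ℕ,
            ((Nat.factorial (i + 1) : ℝ))⁻¹ • (adC x ^ i) y)) = y) :=
  ContinuousLinearMap.bernoulli_series_inverts_dexp (adC x) hx
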